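/- Let σ : ℝ → ℝ be C¹ with M₁ ≤ σ′(x) ≤ M₂ for all x ∈ ℝ, where 0 < M₁ ≤ M₂, σ(0) = 0 and x·σ(x) ≥ 0 for all x. Let c ∈ ℕ and let W = W₁ × ⋯ × W_c, where each W_i is a finite-dimensional subspace of L²(ℝ) ∩ L^∞(ℝ). Then the Nemytskii operator σ : W → (L²(ℝ))^c given componentwise by σ(f)_i(x) = σ(f_i(x)) is Fréchet differentiable at every g ∈ W, its Fréchet derivative is the bounded linear map σ′(g) : W → (L²(ℝ))^c, (σ′(g)[f])_i(x) = σ′(g_i(x)) f_i(x), which satisfies ‖σ′(g)[f]‖₂ ≤ M₂‖f‖₂, and the map g ↦ σ′(g) is continuous from W to the space of bounded linear operators W → (L²(ℝ))^c; in particular σ ∈ C¹(W). -/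

import Mathlib

set_option synthInstance.maxHeartbeats 1000000

open MeasureTheory Real
open scoped Classical

noncomputable abbrev H : Type := MeasureTheory.Lp ℝ 2 (volume : Measure ℝ)

/-- The class in `L²(ℝ)` of a function (zero if the function is not square integrable). -/
noncomputable def toLp2 (f : ℝ → ℝ) : H :=
  if h : MemLp f 2 volume then h.toLp f else 0

open scoped ENNReal NNReal BoundedContinuousFunction Topology

/-!
Because each `W i` is finite-dimensional and consists of essentially bounded functions, its
inclusion into `L^∞` is continuous: convergence in `W` is a.e.-uniform convergence. On a bounded
interval `σ′` is uniformly continuous, so `|σ (a + b) - σ a - σ′ a * b| ≤ ε |b|` as soon as `|b|`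
is small, uniformly in `|a| ≤ R`; applied pointwise and integrated, this is Fréchet
differentiability with derivative the multiplication by `σ′ ∘ g`. The same uniform continuity
makes `g ↦ σ′ ∘ g` continuous into `L^∞`, and multiplication by an `L^∞` function is a bounded
bilinear operation (Hölder), which gives the continuity of the derivative.
-/

theorem Continuous.exists_forall_dist_lt_of_isCompact {X Y : Type*} [PseudoMetricSpace X]
    [PseudoMetricSpace Y] {f : X → Y} (hf : Continuous f) {K : Set X} (hK : IsCompact K)
    {ε : ℝ} (hε : 0 < ε) : ∃ δ > 0, ∀ a ∈ K, ∀ b, dist a b < δ → dist (f a) (f b) < ε := by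
  obtain ⟨δ, hδ, h⟩ := Metric.mem_uniformity_dist.1 <|
    hK.uniformContinuousAt_of_continuousAt f (fun _ _ => hf.continuousAt)
      (Metric.dist_mem_uniformity hε)
  exact ⟨δ, hδ, fun a ha b hab => h hab ha⟩

theorem exists_abs_sub_sub_mul_le {σ φ : ℝ → ℝ} (hσ : ∀ x, HasDerivAt σ (φ x) x)
    (hφ : Continuous φ) (R : ℝ) {ε : ℝ} (hε : 0 < ε) :
    ∃ δ > 0, ∀ a b, |a| ≤ R → |b - a| < δ → |σ b - σ a - φ a * (b - a)| ≤ ε * |b - a| := by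
  obtain ⟨δ, hδ, hφδ⟩ := hφ.exists_forall_dist_lt_of_isCompact (isCompact_closedBall 0 R) hε
  refine ⟨δ, hδ, fun a b ha hb => ?_⟩
  have hderiv : ∀ y ∈ Set.uIcc a b,
      HasDerivWithinAt (fun y => σ y - φ a * y) (φ y - φ a) (Set.uIcc a b) y := fun y _ => by
    have h := ((hσ y).sub ((hasDerivAt_id y).const_mul (φ a))).hasDerivWithinAt
      (s := Set.uIcc a b)
    rwa [mul_one] at h
  have hbound : ∀ y ∈ Set.uIcc a b, ‖φ y - φ a‖ ≤ ε := fun y hy => by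
    have hya : |y - a| ≤ |b - a| := Set.abs_sub_left_of_mem_uIcc hy
    have hclose := hφδ a (by simpa using ha) y (by rw [dist_comm, Real.dist_eq]; linarith)
    rw [dist_comm, Real.dist_eq] at hclose
    exact hclose.le
  have hmvt := (convex_uIcc a b).norm_image_sub_le_of_norm_hasDerivWithin_le hderiv hbound
    Set.left_mem_uIcc Set.right_mem_uIcc
  rw [Real.norm_eq_abs, Real.norm_eq_abs] at hmvt
  calc |σ b - σ a - φ a * (b - a)| = |σ b - φ a * b - (σ a - φ a * a)| := by ring_nf
    _ ≤ ε * |b - a| := hmvt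

namespace MeasureTheory.Lp

variable {α E : Type*} [MeasurableSpace α] {μ : Measure α} [NormedAddCommGroup E]

theorem ae_norm_le_norm_top (u : Lp E ∞ μ) : ∀ᵐ x ∂μ, ‖u x‖ ≤ ‖u‖ := by
  have hu := Lp.eLpNorm_lt_top u
  rw [eLpNorm_exponent_top] at hu
  filter_upwards [ae_le_eLpNormEssSup (f := ⇑u) (μ := μ)] with x hx
  rw [Lp.norm_def, eLpNorm_exponent_top, ← ofReal_norm] at *
  exact (ENNReal.ofReal_le_iff_le_toReal hu.ne).mp hx

theorem norm_top_le_of_ae_bound {u : Lp E ∞ μ} {C : ℝ} (hC : 0 ≤ C) (h : ∀ᵐ x ∂μ, ‖u x‖ ≤ C) :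
    ‖u‖ ≤ C := by
  rw [Lp.norm_def, eLpNorm_exponent_top]
  exact ENNReal.toReal_le_of_le_ofReal hC (eLpNormEssSup_le_of_ae_bound h)

end MeasureTheory.Lp

section

variable {α E : Type*} [MeasurableSpace α] {μ : Measure α} [NormedAddCommGroup E]
  [NormedSpace ℝ E] {p : ℝ≥0∞} [Fact (1 ≤ p)]

noncomputable def Submodule.inclusionLpTop (W : Submodule ℝ (Lp E p μ)) [FiniteDimensional ℝ W]
    (hW : ∀ f ∈ W, MemLp f ∞ μ) : W →L[ℝ] Lp E ∞ μ :=
  LinearMap.toContinuousLinearMap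
    { toFun f := ⟨(f : Lp E p μ), Lp.mem_Lp_iff_memLp.2 (hW f f.2)⟩
      map_add' _ _ := rfl
      map_smul' _ _ := rfl }

end

namespace BoundedContinuousFunction

variable {α E F : Type*} [MeasurableSpace α] {μ : Measure α} [NormedAddCommGroup E]
  [NormedAddCommGroup F] {p q : ℝ≥0∞}

noncomputable def compLpTop (φ : E →ᵇ F) (u : Lp E p μ) : Lp F ∞ μ :=
  (memLp_top_of_bound (φ.continuous.comp_aestronglyMeasurable (Lp.aestronglyMeasurable u)) ‖φ‖
    (ae_of_all _ fun x => φ.norm_coe_le_norm (u x))).toLp (φ ∘ u)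

theorem coeFn_compLpTop (φ : E →ᵇ F) (u : Lp E p μ) : φ.compLpTop u =ᵐ[μ] φ ∘ u :=
  MemLp.coeFn_toLp _

theorem compLpTop_congr (φ : E →ᵇ F) {u : Lp E p μ} {v : Lp E q μ} (h : u =ᵐ[μ] v) :
    φ.compLpTop u = φ.compLpTop v :=
  MemLp.toLp_congr _ _ (h.fun_comp φ)

theorem continuous_compLpTop [ProperSpace E] (φ : E →ᵇ F) :
    Continuous (φ.compLpTop : Lp E ∞ μ → Lp F ∞ μ) := by
  refine Metric.continuous_iff.2 fun u ε hε => ?_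
  obtain ⟨δ, hδ, hφ⟩ := φ.continuous.exists_forall_dist_lt_of_isCompact
    (isCompact_closedBall 0 ‖u‖) (half_pos hε)
  refine ⟨δ, hδ, fun v hv => ?_⟩
  refine lt_of_le_of_lt ?_ (half_lt_self hε)
  rw [dist_eq_norm] at hv ⊢
  refine Lp.norm_top_le_of_ae_bound (half_pos hε).le ?_
  filter_upwards [Lp.coeFn_sub (φ.compLpTop v) (φ.compLpTop u), φ.coeFn_compLpTop u,
    φ.coeFn_compLpTop v, Lp.coeFn_sub v u, Lp.ae_norm_le_norm_top u,
    Lp.ae_norm_le_norm_top (v - u)] with x hφvu hφu hφv hvu hu hvu'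
  rw [hφvu, Pi.sub_apply, hφu, hφv, ← dist_eq_norm, dist_comm]
  refine (hφ (u x) (by simpa using hu) (v x) ?_).le
  rw [dist_comm, dist_eq_norm, ← Pi.sub_apply, ← hvu]
  exact hvu'.trans_lt hv

variable [Fact (1 ≤ p)]

noncomputable def mulLp (φ : ℝ →ᵇ ℝ) (u : Lp ℝ q μ) : Lp ℝ p μ →L[ℝ] Lp ℝ p μ :=
  (ContinuousLinearMap.mul ℝ ℝ).holderL μ ∞ p p (φ.compLpTop u)

theorem coeFn_mulLp (φ : ℝ →ᵇ ℝ) (u : Lp ℝ q μ) (v : Lp ℝ p μ) :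
    φ.mulLp u v =ᵐ[μ] fun x => φ (u x) * v x := by
  filter_upwards [(ContinuousLinearMap.mul ℝ ℝ).coeFn_holder (r := p) (φ.compLpTop u) v,
    φ.coeFn_compLpTop u] with x hx hφ
  simp [mulLp, hx, hφ]

theorem norm_mulLp_apply_le (φ : ℝ →ᵇ ℝ) (u : Lp ℝ q μ) (v : Lp ℝ p μ) :
    ‖φ.mulLp u v‖ ≤ ‖φ‖ * ‖v‖ :=
  Lp.norm_le_mul_norm_of_ae_le_mul <| by
    filter_upwards [φ.coeFn_mulLp u v] with x hx
    rw [hx, norm_mul]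
    exact mul_le_mul_of_nonneg_right (φ.norm_coe_le_norm _) (norm_nonneg _)

theorem continuous_mulLp {X : Type*} [TopologicalSpace X] (φ : ℝ →ᵇ ℝ) {u : X → Lp ℝ q μ}
    {v : X → Lp ℝ ∞ μ} (hv : Continuous v) (huv : ∀ x, v x =ᵐ[μ] u x) :
    Continuous fun x => (φ.mulLp (u x) : Lp ℝ p μ →L[ℝ] Lp ℝ p μ) := by
  simp_rw [mulLp, ← φ.compLpTop_congr (huv _)]
  exact (ContinuousLinearMap.continuous _).comp (φ.continuous_compLpTop.comp hv)

end BoundedContinuousFunction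

namespace LipschitzWith

variable {α : Type*} [MeasurableSpace α] {μ : Measure α} {p : ℝ≥0∞} [Fact (1 ≤ p)]
  {σ : ℝ → ℝ} {K : ℝ≥0} (hlip : LipschitzWith K σ) (hσ0 : σ 0 = 0) {φ : ℝ →ᵇ ℝ}

theorem exists_norm_compLp_add_sub_sub_le (hσ : ∀ x, HasDerivAt σ (φ x) x) (R : ℝ) {ε : ℝ}
    (hε : 0 < ε) :
    ∃ δ > 0, ∀ u v : Lp ℝ p μ, (∀ᵐ x ∂μ, |u x| ≤ R) → (∀ᵐ x ∂μ, |v x| < δ) →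
      ‖hlip.compLp hσ0 (u + v) - hlip.compLp hσ0 u - φ.mulLp u v‖ ≤ ε * ‖v‖ := by
  obtain ⟨δ, hδ, hσδ⟩ := exists_abs_sub_sub_mul_le hσ φ.continuous R hε
  refine ⟨δ, hδ, fun u v hu hv => Lp.norm_le_mul_norm_of_ae_le_mul ?_⟩
  filter_upwards [Lp.coeFn_sub (hlip.compLp hσ0 (u + v) - hlip.compLp hσ0 u) (φ.mulLp u v),
    Lp.coeFn_sub (hlip.compLp hσ0 (u + v)) (hlip.compLp hσ0 u), hlip.coeFn_compLp hσ0 (u + v),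
    hlip.coeFn_compLp hσ0 u, Lp.coeFn_add u v, φ.coeFn_mulLp u v, hu, hv]
    with x h₁ h₂ h₃ h₄ h₅ h₆ hux hvx
  simp only [h₁, h₂, h₃, h₄, h₅, h₆, Pi.sub_apply, Function.comp_apply, Pi.add_apply,
    Real.norm_eq_abs]
  simpa using hσδ (u x) (u x + v x) hux (by simpa using hvx)

theorem hasFDerivAt_compLp_comp (hσ : ∀ x, HasDerivAt σ (φ x) x) {E : Type*}
    [NormedAddCommGroup E] [NormedSpace ℝ E] (T : E →L[ℝ] Lp ℝ p μ) (J : E →L[ℝ] Lp ℝ ∞ μ) (hJ : ∀ e, J e =ᵐ[μ] T e) (e₀ : E) :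
    HasFDerivAt (fun e => hlip.compLp hσ0 (T e)) ((φ.mulLp (T e₀)).comp T) e₀ := by
  rw [hasFDerivAt_iff_isLittleO_nhds_zero]
  refine Asymptotics.IsLittleO.trans_isBigO ?_ (T.isBigO_id (𝓝 0))
  refine Asymptotics.isLittleO_iff.2 fun ε hε => ?_
  obtain ⟨δ, hδ, hrem⟩ :=
    hlip.exists_norm_compLp_add_sub_sub_le (μ := μ) (p := p) hσ0 hσ ‖J e₀‖ hε
  have hJ_small : ∀ᶠ h in 𝓝 (0 : E), ‖J h‖ < δ :=
    (continuous_norm.comp J.continuous).tendsto' 0 0 (by simp) |>.eventually (gt_mem_nhds hδ)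
  filter_upwards [hJ_small] with h hh
  rw [map_add, ContinuousLinearMap.comp_apply]
  refine hrem (T e₀) (T h) ?_ ?_
  · filter_upwards [hJ e₀, Lp.ae_norm_le_norm_top (J e₀)] with x hx hle
    rwa [← hx]
  · filter_upwards [hJ h, Lp.ae_norm_le_norm_top (J h)] with x hx hle
    rw [← hx]
    exact hle.trans_lt hh

end LipschitzWith

theorem toLp2_eq_of_ae (u : H) {f : ℝ → ℝ} (h : u =ᵐ[volume] f) : toLp2 f = u := by
  have hf : MemLp f 2 volume := (memLp_congr_ae h).1 (Lp.memLp u)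
  rw [toLp2, dif_pos hf, ← Lp.toLp_coeFn u (Lp.memLp u)]
  exact MemLp.toLp_congr _ _ h.symm

theorem nemytskii_contDiff_general
    (M₁ M₂ : ℝ) (hM₁ : 0 < M₁)
    (σ : ℝ → ℝ) (hσC1 : ContDiff ℝ 1 σ)
    (hσderiv : ∀ x : ℝ, M₁ ≤ deriv σ x ∧ deriv σ x ≤ M₂)
    (hσ0 : σ 0 = 0)
    (c : ℕ) (W : Fin c → Submodule ℝ H) [∀ i, FiniteDimensional ℝ (W i)]
    (hWbdd : ∀ i : Fin c, ∀ f ∈ W i, MemLp (⇑f) ⊤ volume) :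
    -- the derivative, as a continuous-linear-map-valued map N' on W = Π i, W i
    ∃ N' : (∀ i, W i) → ((∀ i, W i) →L[ℝ] (Fin c → H)),
      -- g ↦ σ′(g) is continuous (so the Nemytskii operator is C¹ on W)
      Continuous N' ∧
      ∀ g : ∀ i, W i,
        -- σ is Fréchet differentiable at g with derivative N' g
        HasFDerivAt (fun f : ∀ i, W i => fun i : Fin c => toLp2 fun x => σ ((f i : H) x))
          (N' g) g ∧
        -- the derivative is the multiplication operator (σ′(g)[f])_i = (σ′∘g_i)·f_i
        (∀ (f : ∀ i, W i) (i : Fin c),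
          N' g f i = toLp2 fun x => deriv σ ((g i : H) x) * (f i : H) x) ∧
        -- the bound ‖σ′(g)[f]‖₂ ≤ M₂ ‖f‖₂ (squared, with the ℓ²-product norm)
        ∀ f : ∀ i, W i, ∑ i, ‖N' g f i‖ ^ 2 ≤ M₂ ^ 2 * ∑ i, ‖(f i : H)‖ ^ 2 := by
  have hM₂ : 0 ≤ M₂ := by linarith [hσderiv 0]
  let φ : ℝ →ᵇ ℝ := .ofNormedAddCommGroup (deriv σ) (hσC1.continuous_deriv le_rfl) M₂ fun x => by
    rw [Real.norm_eq_abs, abs_le]; constructor <;> linarith [hσderiv x]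
  have hσ : ∀ x, HasDerivAt σ (φ x) x := fun x => (hσC1.differentiable one_ne_zero x).hasDerivAt
  have hlip : LipschitzWith ‖φ‖₊ σ :=
    lipschitzWith_of_nnnorm_deriv_le (hσC1.differentiable one_ne_zero) φ.nnnorm_coe_le_nnnorm
  let T (i : Fin c) : (∀ i, W i) →L[ℝ] H := (W i).subtypeL.comp (.proj i)
  let J (i : Fin c) : (∀ i, W i) →L[ℝ] Lp ℝ ∞ volume :=
    ((W i).inclusionLpTop (hWbdd i)).comp (.proj i)
  have hN : (fun f : ∀ i, W i => fun i => toLp2 fun x => σ ((f i : H) x)) =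
      fun f i => hlip.compLp hσ0 (T i f) :=
    funext₂ fun f i => toLp2_eq_of_ae _ (hlip.coeFn_compLp hσ0 _)
  refine ⟨fun g => .pi fun i => (φ.mulLp (T i g)).comp (T i), ?_,
    fun g => ⟨?_, fun f i => ?_, fun f => ?_⟩⟩
  · have hcont (i : Fin c) : Continuous fun g => (φ.mulLp (T i g)).comp (T i) := by
      have hmul := φ.continuous_mulLp (p := 2) (J i).continuous fun _ => .rfl
      fun_prop
    exact (ContinuousLinearMap.piEquivL ℝ (∀ i, W i) fun _ : Fin c => H).continuous.comp
      (continuous_pi hcont)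
  · rw [hN]
    exact hasFDerivAt_pi.2 fun i =>
      hlip.hasFDerivAt_compLp_comp hσ0 hσ (T i) (J i) (fun _ => .rfl) g
  · exact (toLp2_eq_of_ae _ (φ.coeFn_mulLp _ _)).symm
  · rw [Finset.mul_sum]
    gcongr with i
    rw [← mul_pow]
    gcongr
    exact (φ.norm_mulLp_apply_le _ _).trans (mul_le_mul_of_nonneg_right
      (BoundedContinuousFunction.norm_ofNormedAddCommGroup_le _ hM₂ _) (norm_nonneg _))

theorem nemytskii_contDiff
    (M₁ M₂ : ℝ) (hM₁ : 0 < M₁) (hM₁₂ : M₁ ≤ M₂)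
    (σ : ℝ → ℝ) (hσC1 : ContDiff ℝ 1 σ)
    (hσderiv : ∀ x : ℝ, M₁ ≤ deriv σ x ∧ deriv σ x ≤ M₂)
    (hσ0 : σ 0 = 0) (hσsign : ∀ x : ℝ, 0 ≤ x * σ x)
    (c : ℕ) (W : Fin c → Submodule ℝ H) [∀ i, FiniteDimensional ℝ (W i)]
    (hWbdd : ∀ i : Fin c, ∀ f ∈ W i, MemLp (⇑f) ⊤ volume) :
    -- the derivative, as a continuous-linear-map-valued map N' on W = Π i, W i
    ∃ N' : (∀ i, W i) → ((∀ i, W i) →L[ℝ] (Fin c → H)),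
      -- g ↦ σ′(g) is continuous (so the Nemytskii operator is C¹ on W)
      Continuous N' ∧
      ∀ g : ∀ i, W i,
        -- σ is Fréchet differentiable at g with derivative N' g
        HasFDerivAt (fun f : ∀ i, W i => fun i : Fin c => toLp2 fun x => σ ((f i : H) x))
          (N' g) g ∧
        -- the derivative is the multiplication operator (σ′(g)[f])_i = (σ′∘g_i)·f_i
        (∀ (f : ∀ i, W i) (i : Fin c),
          N' g f i = toLp2 fun x => deriv σ ((g i : H) x) * (f i : H) x) ∧
        -- the bound ‖σ′(g)[f]‖₂ ≤ M₂ ‖f‖₂ (squared, with the ℓ²-product norm)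
        ∀ f : ∀ i, W i, ∑ i, ‖N' g f i‖ ^ 2 ≤ M₂ ^ 2 * ∑ i, ‖(f i : H)‖ ^ 2 :=
  nemytskii_contDiff_general M₁ M₂ hM₁ σ hσC1 hσderiv hσ0 c W hWbdd
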